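/- Define Φ : ℝ×(0,∞) → ℝ by Φ(x,y) = |x|·J(L⁻¹(y/|x|)) for x ≠ 0 and Φ(0,y) = 0. Then Φ is jointly convex on ℝ×(0,∞): for all (x₁,y₁), (x₂,y₂) ∈ ℝ×(0,∞) and λ ∈ [0,1], Φ(λx₁+(1−λ)x₂, λy₁+(1−λ)y₂) ≤ λ·Φ(x₁,y₁) + (1−λ)·Φ(x₂,y₂). -/

import Mathlib

/-- Binary entropy function. -/
noncomputable def H2 (x : ℝ) : ℝ := -x * Real.logb 2 x - (1 - x) * Real.logb 2 (1 - x)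

/-- `J`, the derivative of the binary entropy function. -/
noncomputable def J (x : ℝ) : ℝ := Real.logb 2 ((1 - x) / x)

/-- `L(u) = 2·H₂(u)/(1 − 2u)` for `u ∈ [0,1/2)` (with `L(0) = 0`). -/
noncomputable def L (u : ℝ) : ℝ := 2 * H2 u / (1 - 2 * u)

/-- `L⁻¹ : [0,∞) → [0,1/2)`, the inverse of `L`. -/
noncomputable def Linv : ℝ → ℝ := Function.invFunOn L (Set.Ico 0 (1 / 2))

/-- `Φ(x,y) = |x|·J(L⁻¹(y/|x|))` for `x ≠ 0`, and `Φ(0,y) = 0`. -/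
noncomputable def Phi (x y : ℝ) : ℝ := if x = 0 then 0 else |x| * J (Linv (y / |x|))

open Real Set Filter Topology

/-!
`Phi` is the perspective `(x, y) ↦ |x| g (y / |x|)` of `g = J ∘ L⁻¹`, and `g` is nonnegative
with a nonpositive supporting slope at every point of `(0, ∞)`: writing `s = L u`, the slope at
`s` is `J'(u) / L'(u) = -(1 - 2u)² / (2 η(u(1 - u)))` with `η(s) = -s log s`, which increases
with `u`, so `J - B L` is minimised at `u` for that slope `B`.

A supporting line `g s + B (t - s)` of `g` turns into the minorant `(g s - B s) |x| + B y` of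
`Phi`, which touches it on the ray `y = s |x|` and is convex because `g s - B s ≥ 0`; taking `s`
on the ray through the convex combination gives the inequality.
-/

noncomputable def absPerspective (g : ℝ → ℝ) (x y : ℝ) : ℝ :=
  if x = 0 then 0 else |x| * g (y / |x|)

section absPerspective

variable {g : ℝ → ℝ}

lemma absPerspective_nonneg (hg : ∀ t, 0 < t → 0 ≤ g t) (x : ℝ) {y : ℝ} (hy : 0 < y) :
    0 ≤ absPerspective g x y := by
  unfold absPerspective
  split_ifs with hx
  · exact le_rfl
  · have hx' : 0 < |x| := abs_pos.2 hx
    exact mul_nonneg hx'.le (hg _ (div_pos hy hx'))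

lemma absPerspective_eq_of_ne_zero {x : ℝ} (hx : x ≠ 0) (y B : ℝ) :
    absPerspective g x y = (g (y / |x|) - B * (y / |x|)) * |x| + B * y := by
  have hx' : |x| ≠ 0 := abs_ne_zero.2 hx
  rw [absPerspective, if_neg hx]
  field_simp
  ring

lemma affine_le_absPerspective {s B : ℝ} (hB : B ≤ 0)
    (hsupp : ∀ t, 0 < t → g s + B * (t - s) ≤ g t) (x : ℝ) {y : ℝ} (hy : 0 < y) :
    (g s - B * s) * |x| + B * y ≤ absPerspective g x y := by
  by_cases hx : x = 0
  · simp only [absPerspective, hx, ↓reduceIte, abs_zero, mul_zero, zero_add]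
    nlinarith
  · have hx' : 0 < |x| := abs_pos.2 hx
    rw [absPerspective_eq_of_ne_zero hx y B]
    have := mul_le_mul_of_nonneg_left (hsupp _ (div_pos hy hx')) hx'.le
    nlinarith

theorem convexOn_absPerspective (hg : ∀ t, 0 < t → 0 ≤ g t)
    (hsupp : ∀ s, 0 < s → ∃ B ≤ 0, ∀ t, 0 < t → g s + B * (t - s) ≤ g t) :
    ConvexOn ℝ (univ ×ˢ Ioi 0) (fun p : ℝ × ℝ ↦ absPerspective g p.1 p.2) := by
  refine ⟨convex_univ.prod (convex_Ioi 0), ?_⟩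
  rintro ⟨x₁, y₁⟩ ⟨-, hy₁ : 0 < y₁⟩ ⟨x₂, y₂⟩ ⟨-, hy₂ : 0 < y₂⟩ a b ha hb hab
  simp only [Prod.smul_mk, Prod.mk_add_mk, smul_eq_mul]
  have hy : 0 < a * y₁ + b * y₂ := convex_Ioi (0 : ℝ) hy₁ hy₂ ha hb hab
  by_cases hx : a * x₁ + b * x₂ = 0
  · rw [absPerspective, if_pos hx]
    have := absPerspective_nonneg hg x₁ hy₁
    have := absPerspective_nonneg hg x₂ hy₂
    positivity
  set s := (a * y₁ + b * y₂) / |a * x₁ + b * x₂|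
  have hs : 0 < s := div_pos hy (abs_pos.2 hx)
  obtain ⟨B, hB, hsupp_s⟩ := hsupp s hs
  have hA : 0 ≤ g s - B * s := by nlinarith [hg s hs]
  have htri : |a * x₁ + b * x₂| ≤ a * |x₁| + b * |x₂| := by
    simpa [abs_mul, abs_of_nonneg ha, abs_of_nonneg hb] using abs_add_le (a * x₁) (b * x₂)
  calc absPerspective g (a * x₁ + b * x₂) (a * y₁ + b * y₂)
      = (g s - B * s) * |a * x₁ + b * x₂| + B * (a * y₁ + b * y₂) :=
        absPerspective_eq_of_ne_zero hx _ B
    _ ≤ a * ((g s - B * s) * |x₁| + B * y₁) + b * ((g s - B * s) * |x₂| + B * y₂) := by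
        nlinarith [mul_le_mul_of_nonneg_left htri hA]
    _ ≤ a * absPerspective g x₁ y₁ + b * absPerspective g x₂ y₂ := by
        gcongr
        · exact affine_le_absPerspective hB hsupp_s x₁ hy₁
        · exact affine_le_absPerspective hB hsupp_s x₂ hy₂

end absPerspective

lemma H2_eq_binEntropy (x : ℝ) : H2 x = binEntropy x / log 2 := by
  simp only [H2, binEntropy, logb, log_inv]
  ring

lemma continuous_H2 : Continuous H2 := by
  rw [funext H2_eq_binEntropy]
  fun_prop

lemma J_eq {x : ℝ} (hx₀ : 0 < x) (hx₁ : x < 1) : J x = (log (1 - x) - log x) / log 2 := by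
  rw [J, logb, log_div (by linarith) hx₀.ne']

lemma J_nonneg {x : ℝ} (hx₀ : 0 < x) (hx : x ≤ 1 / 2) : 0 ≤ J x :=
  logb_nonneg one_lt_two ((le_div_iff₀ hx₀).2 (by linarith))

lemma hasDerivAt_H2 {x : ℝ} (hx₀ : 0 < x) (hx₁ : x < 1) : HasDerivAt H2 (J x) x := by
  rw [funext H2_eq_binEntropy, J_eq hx₀ hx₁]
  exact (hasDerivAt_binEntropy hx₀.ne' hx₁.ne).div_const _

lemma hasDerivAt_J {x : ℝ} (hx₀ : 0 < x) (hx₁ : x < 1) :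
    HasDerivAt J (-1 / (log 2 * (x * (1 - x)))) x := by
  have hquot : HasDerivAt (fun x ↦ (1 - x) / x) ((-1 * x - (1 - x) * 1) / x ^ 2) x :=
    ((hasDerivAt_id' x).const_sub 1).div (hasDerivAt_id' x) hx₀.ne'
  refine ((hquot.log (div_pos (by linarith) hx₀).ne').div_const (log 2)).congr_deriv ?_
  have : 1 - x ≠ 0 := by linarith
  field_simp
  ring

lemma hasDerivAt_L {x : ℝ} (hx₀ : 0 < x) (hx : x < 1 / 2) :
    HasDerivAt L (-2 * log (x * (1 - x)) / (log 2 * (1 - 2 * x) ^ 2)) x := by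
  have hx₁ : x < 1 := by linarith
  have hden : 1 - 2 * x ≠ 0 := by linarith
  refine (((hasDerivAt_H2 hx₀ hx₁).const_mul 2).div
    (((hasDerivAt_id' x).const_mul 2).const_sub 1) hden).congr_deriv ?_
  rw [J_eq hx₀ hx₁, H2_eq_binEntropy, binEntropy, log_inv, log_inv,
    log_mul hx₀.ne' (by linarith)]
  field_simp
  ring

lemma L_zero : L 0 = 0 := by simp [L, H2]

lemma continuousOn_L : ContinuousOn L (Iio (1 / 2)) :=
  (continuous_const.mul continuous_H2).continuousOn.div (by fun_prop)
    fun u (hu : u < 1 / 2) ↦ by linarith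

lemma tendsto_L_nhdsLT_half : Tendsto L (𝓝[<] (1 / 2)) atTop := by
  have hH2 : Tendsto (fun u ↦ 2 * H2 u) (𝓝[<] (1 / 2)) (𝓝 (2 * H2 (1 / 2))) :=
    ((continuous_const.mul continuous_H2).tendsto _).mono_left nhdsWithin_le_nhds
  have hden : Tendsto (fun u : ℝ ↦ 1 - 2 * u) (𝓝[<] (1 / 2)) (𝓝[>] 0) := by
    refine tendsto_nhdsWithin_of_tendsto_nhds_of_eventually_within _ ?_ ?_
    · exact ((by fun_prop : Continuous fun u : ℝ ↦ 1 - 2 * u).tendsto' _ _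
        (by norm_num)).mono_left nhdsWithin_le_nhds
    · filter_upwards [self_mem_nhdsWithin] with u (hu : u < 1 / 2)
      simp only [mem_Ioi]; linarith
  have hH2_half : H2 (1 / 2) = 1 := by
    rw [H2_eq_binEntropy, one_div, binEntropy_two_inv, div_self (log_pos one_lt_two).ne']
  exact (hH2.pos_mul_atTop (by rw [hH2_half]; norm_num) (tendsto_inv_nhdsGT_zero.comp hden))

lemma exists_L_eq {t : ℝ} (ht : 0 ≤ t) : ∃ u ∈ Ico 0 (1 / 2), L u = t := by
  obtain ⟨c, hLc, hc⟩ := ((tendsto_L_nhdsLT_half.eventually_ge_atTop t).and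
    (Ioo_mem_nhdsLT (by norm_num : (0 : ℝ) < 1 / 2))).exists
  obtain ⟨u, hu, rfl⟩ := intermediate_value_Icc hc.1.le (continuousOn_L.mono
    fun u hu ↦ hu.2.trans_lt hc.2) ⟨by rwa [L_zero], hLc⟩
  exact ⟨u, ⟨hu.1, hu.2.trans_lt hc.2⟩, rfl⟩

lemma L_Linv {t : ℝ} (ht : 0 ≤ t) : L (Linv t) = t :=
  Function.invFunOn_eq (exists_L_eq ht)

lemma Linv_mem_Ioo {t : ℝ} (ht : 0 < t) : Linv t ∈ Ioo 0 (1 / 2) := by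
  obtain ⟨h₀, h⟩ : Linv t ∈ Ico 0 (1 / 2) := Function.invFunOn_mem (exists_L_eq ht.le)
  refine ⟨h₀.lt_of_ne fun h₀ ↦ ?_, h⟩
  have := L_Linv ht.le
  rw [← h₀, L_zero] at this
  exact ht.ne this

lemma negMulLog_pos {x : ℝ} (hx₀ : 0 < x) (hx₁ : x < 1) : 0 < negMulLog x := by
  rw [negMulLog, neg_mul, neg_pos]
  exact mul_log_neg hx₀ hx₁

lemma monotoneOn_negMulLog : MonotoneOn negMulLog (Icc 0 (exp (-1))) := by
  refine monotoneOn_of_deriv_nonneg (convex_Icc _ _) continuous_negMulLog.continuousOn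
    (differentiableOn_negMulLog.mono ?_) fun x hx ↦ ?_
  · rw [interior_Icc]
    exact fun x hx ↦ hx.1.ne'
  · rw [interior_Icc] at hx
    rw [deriv_negMulLog hx.1.ne']
    linarith [(log_le_iff_le_exp hx.1).2 hx.2.le]

lemma mul_one_sub_mem_Ioo {u : ℝ} (hu : u ∈ Ioo 0 (1 / 2)) : u * (1 - u) ∈ Ioo 0 (1 / 4) :=
  ⟨mul_pos hu.1 (by linarith [hu.2]), by nlinarith [hu.2]⟩

/-- `J' u / L' u`, the derivative of `J ∘ L⁻¹` at `L u`. -/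
noncomputable def supportSlope (u : ℝ) : ℝ :=
  -((1 - 2 * u) ^ 2 / (2 * negMulLog (u * (1 - u))))

lemma supportSlope_neg {u : ℝ} (hu : u ∈ Ioo 0 (1 / 2)) : supportSlope u < 0 := by
  have := mul_one_sub_mem_Ioo hu
  have := negMulLog_pos this.1 (by linarith [this.2])
  have : 0 < 1 - 2 * u := by linarith [hu.2]
  unfold supportSlope
  exact neg_neg_of_pos (by positivity)

lemma monotoneOn_supportSlope : MonotoneOn supportSlope (Ioo 0 (1 / 2)) := by
  intro u hu v hv huv
  obtain ⟨hsu₀, hsu⟩ := mul_one_sub_mem_Ioo hu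
  obtain ⟨hsv₀, hsv⟩ := mul_one_sub_mem_Ioo hv
  have hquarter : (1 / 4 : ℝ) ≤ exp (-1) := by linarith [exp_neg_one_gt_d9]
  have hN : negMulLog (u * (1 - u)) ≤ negMulLog (v * (1 - v)) :=
    monotoneOn_negMulLog ⟨hsu₀.le, by linarith⟩ ⟨hsv₀.le, by linarith⟩ (by nlinarith [hv.2])
  have hsq : (1 - 2 * v) ^ 2 ≤ (1 - 2 * u) ^ 2 := by nlinarith [hv.2]
  have hNu : 0 < negMulLog (u * (1 - u)) := negMulLog_pos hsu₀ (by linarith)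
  exact neg_le_neg (div_le_div₀ (sq_nonneg _) hsq (by positivity) (by linarith))

lemma deriv_L_mul_supportSlope {u : ℝ} (hu : u ∈ Ioo 0 (1 / 2)) :
    -2 * log (u * (1 - u)) / (log 2 * (1 - 2 * u) ^ 2) * supportSlope u =
      -1 / (log 2 * (u * (1 - u))) := by
  obtain ⟨hs₀, hs⟩ := mul_one_sub_mem_Ioo hu
  have : log (u * (1 - u)) ≠ 0 := (log_neg hs₀ (by linarith)).ne
  have : 1 - 2 * u ≠ 0 := by linarith [hu.2]
  have : log 2 ≠ 0 := (log_pos one_lt_two).ne'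
  rw [supportSlope, negMulLog]
  field_simp

lemma isMinOn_J_sub_supportSlope_mul_L {u : ℝ} (hu : u ∈ Ioo 0 (1 / 2)) :
    IsMinOn (fun v ↦ J v - supportSlope u * L v) (Ioo 0 (1 / 2)) u := by
  have hderiv : ∀ v ∈ Ioo (0 : ℝ) (1 / 2), HasDerivAt (fun v ↦ J v - supportSlope u * L v)
      (-2 * log (v * (1 - v)) / (log 2 * (1 - 2 * v) ^ 2) *
        (supportSlope v - supportSlope u)) v := by
    intro v hv
    refine ((hasDerivAt_J hv.1 (by linarith [hv.2])).sub
      ((hasDerivAt_L hv.1 hv.2).const_mul _)).congr_deriv ?_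
    rw [← deriv_L_mul_supportSlope hv]
    ring
  have hL' : ∀ v ∈ Ioo (0 : ℝ) (1 / 2),
      0 ≤ -2 * log (v * (1 - v)) / (log 2 * (1 - 2 * v) ^ 2) := by
    intro v hv
    obtain ⟨hs₀, hs⟩ := mul_one_sub_mem_Ioo hv
    have := log_neg hs₀ (by linarith)
    have := log_pos one_lt_two
    exact div_nonneg (by linarith) (by positivity)
  have hIoo : ∀ {a b}, 0 ≤ a → b ≤ 1 / 2 → Ioo a b ⊆ Ioo (0 : ℝ) (1 / 2) :=
    fun ha hb v hv ↦ ⟨ha.trans_lt hv.1, hv.2.trans_le hb⟩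
  refine isMinOn_Ioo_of_deriv (hderiv u hu).continuousAt
    (fun v hv ↦ (hderiv v (hIoo le_rfl hu.2.le hv)).differentiableAt.differentiableWithinAt)
    (fun v hv ↦ (hderiv v (hIoo hu.1.le le_rfl hv)).differentiableAt.differentiableWithinAt)
    (fun v hv ↦ ?_) (fun v hv ↦ ?_)
  · have hv' := hIoo le_rfl hu.2.le hv
    rw [(hderiv v hv').deriv]
    exact mul_nonpos_of_nonneg_of_nonpos (hL' v hv')
      (sub_nonpos.2 (monotoneOn_supportSlope hv' hu hv.2.le))
  · have hv' := hIoo hu.1.le le_rfl hv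
    rw [(hderiv v hv').deriv]
    exact mul_nonneg (hL' v hv') (sub_nonneg.2 (monotoneOn_supportSlope hu hv' hv.1.le))

lemma J_Linv_nonneg {t : ℝ} (ht : 0 < t) : 0 ≤ J (Linv t) :=
  J_nonneg (Linv_mem_Ioo ht).1 (Linv_mem_Ioo ht).2.le

lemma exists_supportingSlope_J_Linv {s : ℝ} (hs : 0 < s) :
    ∃ B ≤ 0, ∀ t, 0 < t → J (Linv s) + B * (t - s) ≤ J (Linv t) := by
  set B := supportSlope (Linv s)
  refine ⟨B, (supportSlope_neg (Linv_mem_Ioo hs)).le, fun t ht ↦ ?_⟩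
  have hmin : J (Linv s) - B * L (Linv s) ≤ J (Linv t) - B * L (Linv t) :=
    isMinOn_J_sub_supportSlope_mul_L (Linv_mem_Ioo hs) (Linv_mem_Ioo ht)
  rw [L_Linv hs.le, L_Linv ht.le] at hmin
  linarith

theorem stmt17 (x₁ x₂ y₁ y₂ lam : ℝ) (hy₁ : 0 < y₁) (hy₂ : 0 < y₂)
    (hlam : lam ∈ Set.Icc (0 : ℝ) 1) :
    Phi (lam * x₁ + (1 - lam) * x₂) (lam * y₁ + (1 - lam) * y₂) ≤
      lam * Phi x₁ y₁ + (1 - lam) * Phi x₂ y₂ :=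
  (convexOn_absPerspective (fun _ ↦ J_Linv_nonneg) fun _ ↦ exists_supportingSlope_J_Linv).2
    (x := (x₁, y₁)) ⟨mem_univ _, hy₁⟩ (y := (x₂, y₂)) ⟨mem_univ _, hy₂⟩
    hlam.1 (sub_nonneg.2 hlam.2) (add_sub_cancel lam 1)
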